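/- arXiv:math/0402002 — 2 statements merged into one kernel-verified Lean document; each statement's English description precedes it below -/
import Mathlib

section
/- Fix c ∈ ℝ and m ∈ ℕ. For every φ ∈ C_c^∞(U), let G be the function S·(∂_t φ + ∂_x φ + p·φ) on U extended by zero to all of ℝ² (a smooth compactly supported function on ℝ²). Then ∫_ℝ (∂_t^m G)(x, x+c) dx = 0, where ∂_t^m denotes the m-th partial derivative in the second variable. (This expresses that the distribution S·δ^{(m)}(t−x−c), where δ^{(m)}(t−x−c) is the m-th derivative of the Dirac measure supported on the line t = x + c, is a distributional solution of (∂_t + ∂_x − p)u = 0 on U.) -/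
open Real MeasureTheory


noncomputable def Dt (f : ℝ × ℝ → ℝ) : ℝ × ℝ → ℝ := fun q => fderiv ℝ f q (0, 1)

lemma hasDerivAt_line2 (x t : ℝ) : HasDerivAt (fun s : ℝ => ((x, s) : ℝ × ℝ)) (0, 1) t :=
  (hasDerivAt_const t x).prodMk (hasDerivAt_id t)

lemma deriv_line2 {f : ℝ × ℝ → ℝ} {x t : ℝ} (hf : DifferentiableAt ℝ f (x, t)) :
    deriv (fun s => f (x, s)) t = fderiv ℝ f (x, t) (0, 1) :=
  (hf.hasFDerivAt.comp_hasDerivAt t (hasDerivAt_line2 x t)).deriv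

lemma deriv_line1 {f : ℝ × ℝ → ℝ} {x t : ℝ} (hf : DifferentiableAt ℝ f (x, t)) :
    deriv (fun y => f (y, t)) x = fderiv ℝ f (x, t) (1, 0) :=
  (hf.hasFDerivAt.comp_hasDerivAt x ((hasDerivAt_id x).prodMk (hasDerivAt_const x t))).deriv

lemma contDiff_fderiv_apply {f : ℝ × ℝ → ℝ} (hf : ContDiff ℝ (⊤ : ℕ∞) f) (v : ℝ × ℝ) :
    ContDiff ℝ (⊤ : ℕ∞) (fun q => fderiv ℝ f q v) :=
  (hf.fderiv_right (by simp)).clm_apply contDiff_const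

lemma hasCompactSupport_fderiv_apply {f : ℝ × ℝ → ℝ} (hf : HasCompactSupport f)
    (v : ℝ × ℝ) : HasCompactSupport (fun q => fderiv ℝ f q v) :=
  (hf.fderiv ℝ).comp_left (g := fun L : (ℝ × ℝ) →L[ℝ] ℝ => L v) rfl

lemma contDiff_Dt_iter {f : ℝ × ℝ → ℝ} (hf : ContDiff ℝ (⊤ : ℕ∞) f) (m : ℕ) :
    ContDiff ℝ (⊤ : ℕ∞) (Dt^[m] f) := by
  induction m generalizing f with
  | zero => exact hf
  | succ n ih =>
    rw [Function.iterate_succ_apply]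
    exact ih (contDiff_fderiv_apply hf _)

lemma hasCompactSupport_Dt_iter {f : ℝ × ℝ → ℝ} (hf : HasCompactSupport f) (m : ℕ) :
    HasCompactSupport (Dt^[m] f) := by
  induction m generalizing f with
  | zero => exact hf
  | succ n ih =>
    rw [Function.iterate_succ_apply]
    exact ih (hasCompactSupport_fderiv_apply hf _)

lemma iteratedDeriv_line {f : ℝ × ℝ → ℝ} (hf : ContDiff ℝ (⊤ : ℕ∞) f) (m : ℕ) (x t : ℝ) :
    iteratedDeriv m (fun s => f (x, s)) t = Dt^[m] f (x, t) := by
  induction m generalizing t with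
  | zero => simp
  | succ n ih =>
    rw [iteratedDeriv_succ, Function.iterate_succ_apply']
    have : iteratedDeriv n (fun s => f (x, s)) = fun s => Dt^[n] f (x, s) :=
      funext fun s => ih s
    rw [this, Dt]
    exact deriv_line2 (((contDiff_Dt_iter hf n).differentiable (by simp)).differentiableAt)

lemma fderiv_fderiv_apply {f : ℝ × ℝ → ℝ} (hf : ContDiff ℝ (⊤ : ℕ∞) f) (q v w : ℝ × ℝ) :
    fderiv ℝ (fun q' => fderiv ℝ f q' v) q w = fderiv ℝ (fderiv ℝ f) q w v := by
  have hc : DifferentiableAt ℝ (fderiv ℝ f) q :=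
    ((hf.fderiv_right (m := (⊤ : ℕ∞)) (by simp)).differentiable (by simp)).differentiableAt
  rw [fderiv_clm_apply hc (differentiableAt_const v)]
  simp

lemma swap_fderiv {f : ℝ × ℝ → ℝ} (hf : ContDiff ℝ (⊤ : ℕ∞) f) (q v w : ℝ × ℝ) :
    fderiv ℝ (fun q' => fderiv ℝ f q' v) q w = fderiv ℝ (fun q' => fderiv ℝ f q' w) q v := by
  rw [fderiv_fderiv_apply hf, fderiv_fderiv_apply hf]
  exact second_derivative_symmetric
    (fun y => ((hf.differentiable (by simp)) y).hasFDerivAt)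
    (((hf.fderiv_right (m := (⊤ : ℕ∞)) (by simp)).differentiable (by simp)) q).hasFDerivAt v w |>.symm

lemma comm_Dt_iter {f : ℝ × ℝ → ℝ} (hf : ContDiff ℝ (⊤ : ℕ∞) f) (v : ℝ × ℝ) (m : ℕ) (q : ℝ × ℝ) :
    Dt^[m] (fun q' => fderiv ℝ f q' v) q = fderiv ℝ (Dt^[m] f) q v := by
  induction m generalizing f with
  | zero => rfl
  | succ n ih =>
    rw [Function.iterate_succ_apply]
    have h1 : Dt (fun q' => fderiv ℝ f q' v) = fun q' => fderiv ℝ (Dt f) q' v := by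
      funext q'
      exact swap_fderiv hf q' v (0, 1)
    rw [h1, ih (f := Dt f) (contDiff_fderiv_apply hf (0, 1)), Function.iterate_succ_apply]

/-- Let `U ⊆ ℝ²` be open and `p, S : U → ℝ` smooth with
`∂_t S + ∂_x S = p·S` on `U`.  Fix `c ∈ ℝ` and `m ∈ ℕ`.  For every `φ ∈ C_c^∞(U)`, let
`G` be the zero extension to `ℝ²` of `S·(∂_t φ + ∂_x φ + p·φ)`.  Then
`∫_ℝ (∂_t^m G)(x, x+c) dx = 0`, i.e. `S·δ^{(m)}(t−x−c)` is a distributional solution of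
`(∂_t + ∂_x − p)u = 0` on `U`. -/
theorem stmt3 (U : Set (ℝ × ℝ)) (hU : IsOpen U)
    (p S : ℝ × ℝ → ℝ) (hp : ContDiffOn ℝ (⊤ : ℕ∞) p U) (hS : ContDiffOn ℝ (⊤ : ℕ∞) S U)
    (hPDE : ∀ q ∈ U,
      deriv (fun s => S (q.1, s)) q.2 + deriv (fun y => S (y, q.2)) q.1 = p q * S q)
    (c : ℝ) (m : ℕ)
    (φ : ℝ × ℝ → ℝ) (hφ : ContDiff ℝ (⊤ : ℕ∞) φ) (hφc : HasCompactSupport φ)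
    (hφU : tsupport φ ⊆ U)
    (G : ℝ × ℝ → ℝ)
    (hG : ∀ q ∈ U, G q = S q *
      (deriv (fun s => φ (q.1, s)) q.2 + deriv (fun y => φ (y, q.2)) q.1 + p q * φ q))
    (hG0 : ∀ q ∉ U, G q = 0) :
    ∫ x : ℝ, iteratedDeriv m (fun s => G (x, s)) (x + c) = 0 := by
  set F : ℝ × ℝ → ℝ := fun q => S q * φ q with hFdef
  -- F vanishes near any point outside U
  have hzero : ∀ q ∉ U, F =ᶠ[nhds q] 0 := by
    intro q hq
    have hqt : q ∉ tsupport φ := fun h => hq (hφU h)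
    filter_upwards [(isClosed_tsupport φ).isOpen_compl.mem_nhds hqt] with q' hq'
    simp [hFdef, image_eq_zero_of_notMem_tsupport hq']
  -- F is smooth
  have hF : ContDiff ℝ (⊤ : ℕ∞) F := by
    rw [contDiff_iff_contDiffAt]
    intro q
    by_cases hq : q ∈ U
    · exact (hS.contDiffAt (hU.mem_nhds hq)).mul hφ.contDiffAt
    · exact contDiffAt_const.congr_of_eventuallyEq (hzero q hq)
  have hFc : HasCompactSupport F := hφc.mul_left
  -- key identity : G = directional derivative of F in direction (1,1)
  have hGF : ∀ q, G q = fderiv ℝ F q (1, 1) := by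
    intro q
    by_cases hq : q ∈ U
    · have hSd : DifferentiableAt ℝ S q :=
        (hS.contDiffAt (hU.mem_nhds hq)).differentiableAt (by simp)
      have hφd : DifferentiableAt ℝ φ q := (hφ.differentiable (by simp)) q
      have e1 : fderiv ℝ F q (1, 1)
          = S q * fderiv ℝ φ q (1, 1) + φ q * fderiv ℝ S q (1, 1) := by
        rw [hFdef]
        rw [fderiv_fun_mul hSd hφd]
        simp [mul_comm]
      have eφ : fderiv ℝ φ q (1, 1) = fderiv ℝ φ q (1, 0) + fderiv ℝ φ q (0, 1) := by
        rw [← map_add]; norm_num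
      have eS : fderiv ℝ S q (1, 1) = fderiv ℝ S q (1, 0) + fderiv ℝ S q (0, 1) := by
        rw [← map_add]; norm_num
      have lφ2 : deriv (fun s => φ (q.1, s)) q.2 = fderiv ℝ φ q (0, 1) := deriv_line2 hφd
      have lφ1 : deriv (fun y => φ (y, q.2)) q.1 = fderiv ℝ φ q (1, 0) := deriv_line1 hφd
      have lS2 : deriv (fun s => S (q.1, s)) q.2 = fderiv ℝ S q (0, 1) := deriv_line2 hSd
      have lS1 : deriv (fun y => S (y, q.2)) q.1 = fderiv ℝ S q (1, 0) := deriv_line1 hSd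
      have hp' := hPDE q hq
      rw [lS2, lS1] at hp'
      rw [hG q hq, lφ2, lφ1, e1, eφ, eS]
      linear_combination (-(φ q)) * hp'
    · rw [hG0 q hq, (hzero q hq).fderiv_eq]
      simp [Pi.zero_def]
  -- the smooth compactly supported function H = ∂_t^m F
  set H : ℝ × ℝ → ℝ := Dt^[m] F with hHdef
  have hH : ContDiff ℝ (⊤ : ℕ∞) H := contDiff_Dt_iter hF m
  have hHc : HasCompactSupport H := hasCompactSupport_Dt_iter hFc m
  set h : ℝ → ℝ := fun x => H (x, x + c) with hhdef
  have hlineC : ContDiff ℝ (⊤ : ℕ∞) (fun x : ℝ => ((x, x + c) : ℝ × ℝ)) :=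
    contDiff_id.prodMk (contDiff_id.add contDiff_const)
  have hch : ContDiff ℝ (⊤ : ℕ∞) h := hH.comp hlineC
  have hchc : HasCompactSupport h := by
    apply HasCompactSupport.intro (hHc.image continuous_fst)
    intro x hx
    have : (x, x + c) ∉ tsupport H := by
      intro hmem
      exact hx ⟨(x, x + c), hmem, rfl⟩
    simpa [hhdef] using image_eq_zero_of_notMem_tsupport this
  -- the integrand equals deriv h
  have hint : ∀ x : ℝ, iteratedDeriv m (fun s => G (x, s)) (x + c) = deriv h x := by
    intro x
    have hG' : (fun s => G (x, s)) = fun s => (fun q => fderiv ℝ F q (1, 1)) (x, s) := by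
      funext s; exact hGF (x, s)
    rw [hG', iteratedDeriv_line (contDiff_fderiv_apply hF (1, 1)) m x (x + c),
      comm_Dt_iter hF (1, 1) m (x, x + c)]
    have hline : HasDerivAt (fun x : ℝ => ((x, x + c) : ℝ × ℝ)) (1, 1) x :=
      (hasDerivAt_id x).prodMk ((hasDerivAt_id x).add_const c)
    have : HasDerivAt h (fderiv ℝ H (x, x + c) (1, 1)) x :=
      (((hH.differentiable (by simp)) (x, x + c)).hasFDerivAt).comp_hasDerivAt x hline
    exact this.deriv.symm
  simp_rw [hint]
  -- integral of the derivative of a compactly supported function is zero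
  have hc1 : ContDiff ℝ 1 h := hch.of_le (by simp)
  have hdc : Continuous (deriv h) := hch.continuous_deriv (by simp)
  have hint1 : IntegrableOn (deriv h) (Set.Iic 0) :=
    (hdc.integrable_of_hasCompactSupport hchc.deriv).integrableOn
  have hint2 : IntegrableOn (deriv h) (Set.Ioi 0) :=
    (hdc.integrable_of_hasCompactSupport hchc.deriv).integrableOn
  rw [← intervalIntegral.integral_Iic_add_Ioi hint1 hint2,
    HasCompactSupport.integral_Iic_deriv_eq hc1 hchc 0,
    HasCompactSupport.integral_Ioi_deriv_eq hc1 hchc 0]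
  ring
end

section
/- Let τ > 0, let S₂, S₃ : D_τ → ℝ be continuous, and let b : [0,τ] → ℝ be continuous. If τ·(max_{D_τ}|S₂|)·(max_{[0,τ]}|b|) < 1, then there exists exactly one continuous function u : D_τ → ℝ satisfying the Volterra-type integral equation u(x,t) = S₃(x,t) + S₂(x,t)·∫₀^{t−x} b(ξ)·u(ξ, t−x) dξ for all (x,t) ∈ D_τ. -/
/-!
The right-hand side `u ↦ S₃ + S₂ · ∫₀^{t-x} b(ξ) u(ξ, t-x) dξ` maps continuous functions on
`D_τ` to continuous functions on `D_τ`, and since the integral runs over an interval of length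
`t - x ≤ τ` it is Lipschitz for the sup norm with constant `τ · max |S₂| · max |b| < 1`.
Banach's fixed-point theorem on `C(D_τ, ℝ)` then gives existence, and uniqueness because every
continuous solution restricts to a fixed point. To evaluate an element of `C(D_τ, ℝ)` inside the
integrals, and to prove continuity of parametric integrals, functions on `D_τ` are extended to the
plane through a continuous retraction of the plane onto `D_τ`.
-/

open Real Set Function intervalIntegral MeasureTheory

def triangle (τ : ℝ) : Set (ℝ × ℝ) := {q | 0 ≤ q.1 ∧ q.1 ≤ q.2 ∧ q.2 ≤ τ}

section Triangle

variable {τ : ℝ}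

theorem isCompact_triangle (τ : ℝ) : IsCompact (triangle τ) := by
  refine (isCompact_Icc (a := ((0 : ℝ), (0 : ℝ))) (b := (τ, τ))).of_isClosed_subset ?_ ?_
  · exact (isClosed_le continuous_const continuous_fst).inter
      ((isClosed_le continuous_fst continuous_snd).inter
        (isClosed_le continuous_snd continuous_const))
  · rintro ⟨x, t⟩ ⟨h0x, hxt, htτ⟩
    exact ⟨⟨h0x, h0x.trans hxt⟩, ⟨hxt.trans htτ, htτ⟩⟩

instance (τ : ℝ) : CompactSpace (triangle τ) := isCompact_iff_compactSpace.mp (isCompact_triangle τ)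

theorem zero_mem_triangle (hτ : 0 ≤ τ) : ((0 : ℝ), (0 : ℝ)) ∈ triangle τ := ⟨le_rfl, le_rfl, hτ⟩

theorem sub_mem_Icc_of_mem_triangle {q : ℝ × ℝ} (hq : q ∈ triangle τ) : q.2 - q.1 ∈ Icc 0 τ := by
  obtain ⟨h0x, hxt, htτ⟩ := hq
  constructor <;> linarith

theorem mk_mem_triangle {ξ s : ℝ} (hξ : ξ ∈ Icc 0 s) (hs : s ≤ τ) : (ξ, s) ∈ triangle τ :=
  ⟨hξ.1, hξ.2, hs⟩

def triangleRetraction (hτ : 0 ≤ τ) : C(ℝ × ℝ, triangle τ) where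
  toFun q := ⟨(max 0 (min q.1 (max 0 (min q.2 τ))), max 0 (min q.2 τ)),
    le_max_left _ _, max_le (le_max_left _ _) (min_le_right _ _), max_le hτ (min_le_right _ _)⟩
  continuous_toFun := by fun_prop

theorem triangleRetraction_of_mem (hτ : 0 ≤ τ) {q : ℝ × ℝ} (hq : q ∈ triangle τ) :
    triangleRetraction hτ q = ⟨q, hq⟩ := by
  obtain ⟨h0x, hxt, htτ⟩ := hq
  ext <;> simp [triangleRetraction, min_eq_left htτ, max_eq_right (h0x.trans hxt),
    min_eq_left hxt, max_eq_right h0x]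

theorem ContinuousOn.continuousOn_intervalIntegral_triangle {g : ℝ × ℝ → ℝ}
    (hg : ContinuousOn g (triangle τ)) :
    ContinuousOn (fun s => ∫ ξ in (0 : ℝ)..s, g (ξ, s)) (Icc 0 τ) := by
  rcases lt_or_ge τ 0 with hτ | hτ
  · simp [Icc_eq_empty_of_lt hτ]
  let r := triangleRetraction hτ
  have hgr : Continuous (g ∘ (↑) ∘ r) :=
    hg.comp_continuous (continuous_subtype_val.comp r.continuous) fun q => (r q).2
  refine (continuous_parametric_intervalIntegral_of_continuous (μ := volume) (a₀ := 0)
    (f := fun s ξ => g (r (ξ, s)))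
    (hgr.comp continuous_swap) continuous_id).continuousOn.congr fun s hs => ?_
  refine integral_congr fun ξ hξ => ?_
  rw [uIcc_of_le hs.1] at hξ
  simp [r, triangleRetraction_of_mem hτ (mk_mem_triangle hξ hs.2)]

theorem ContinuousOn.intervalIntegrable_triangle {g : ℝ × ℝ → ℝ}
    (hg : ContinuousOn g (triangle τ)) {s : ℝ} (hs : s ∈ Icc 0 τ) :
    IntervalIntegrable (fun ξ => g (ξ, s)) volume 0 s := by
  refine ContinuousOn.intervalIntegrable (hg.comp (by fun_prop) fun ξ hξ => ?_)
  rw [uIcc_of_le hs.1] at hξ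
  exact mk_mem_triangle hξ hs.2

end Triangle

theorem IsCompact.abs_le_sSup_abs_image {α : Type*} [TopologicalSpace α] {f : α → ℝ} {K : Set α}
    (hK : IsCompact K) (hf : ContinuousOn f K) {x : α} (hx : x ∈ K) :
    |f x| ≤ sSup ((fun y => |f y|) '' K) :=
  le_csSup (hK.bddAbove_image hf.abs) (mem_image_of_mem _ hx)

section Volterra

variable {τ : ℝ} (S₂ S₃ : ℝ × ℝ → ℝ) (b : ℝ → ℝ)

noncomputable def volterraRHS (u : ℝ × ℝ → ℝ) (q : ℝ × ℝ) : ℝ :=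
  S₃ q + S₂ q * ∫ ξ in (0 : ℝ)..(q.2 - q.1), b ξ * u (ξ, q.2 - q.1)

variable {S₂ S₃ b}

theorem volterraRHS_congr {u v : ℝ × ℝ → ℝ} (h : EqOn u v (triangle τ)) :
    EqOn (volterraRHS S₂ S₃ b u) (volterraRHS S₂ S₃ b v) (triangle τ) := fun q hq => by
  have hs := sub_mem_Icc_of_mem_triangle hq
  refine congrArg (S₃ q + S₂ q * ·) (integral_congr fun ξ hξ => ?_)
  rw [uIcc_of_le hs.1] at hξ
  simp only [h (mk_mem_triangle hξ hs.2)]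

theorem ContinuousOn.comp_fst_mul (hb : ContinuousOn b (Icc 0 τ)) {u : ℝ × ℝ → ℝ}
    (hu : ContinuousOn u (triangle τ)) : ContinuousOn (fun p => b p.1 * u p) (triangle τ) :=
  (hb.comp continuousOn_fst fun _ hp => ⟨hp.1, hp.2.1.trans hp.2.2⟩).mul hu

theorem continuousOn_volterraRHS (hS₂ : ContinuousOn S₂ (triangle τ))
    (hS₃ : ContinuousOn S₃ (triangle τ)) (hb : ContinuousOn b (Icc 0 τ)) {u : ℝ × ℝ → ℝ}
    (hu : ContinuousOn u (triangle τ)) : ContinuousOn (volterraRHS S₂ S₃ b u) (triangle τ) :=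
  hS₃.add <| hS₂.mul <| (hb.comp_fst_mul hu).continuousOn_intervalIntegral_triangle.comp
    (continuous_snd.sub continuous_fst).continuousOn fun _ => sub_mem_Icc_of_mem_triangle

theorem abs_volterraRHS_sub_le (hb : ContinuousOn b (Icc 0 τ)) {u v : ℝ × ℝ → ℝ}
    (hu : ContinuousOn u (triangle τ)) (hv : ContinuousOn v (triangle τ)) {M₂ Mb C : ℝ}
    (hM₂ : ∀ q ∈ triangle τ, |S₂ q| ≤ M₂) (hMb : ∀ x ∈ Icc 0 τ, |b x| ≤ Mb)
    (huv : ∀ q ∈ triangle τ, |u q - v q| ≤ C) {q : ℝ × ℝ} (hq : q ∈ triangle τ) :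
    |volterraRHS S₂ S₃ b u q - volterraRHS S₂ S₃ b v q| ≤ τ * M₂ * Mb * C := by
  set s := q.2 - q.1
  have hs : s ∈ Icc 0 τ := sub_mem_Icc_of_mem_triangle hq
  have h0 : (0, 0) ∈ triangle τ := zero_mem_triangle (hs.1.trans hs.2)
  have hMb0 : 0 ≤ Mb := (abs_nonneg _).trans (hMb 0 (left_mem_Icc.2 (hs.1.trans hs.2)))
  have hC0 : 0 ≤ C := (abs_nonneg _).trans (huv _ h0)
  have hint : |∫ ξ in (0 : ℝ)..s, b ξ * (u (ξ, s) - v (ξ, s))| ≤ Mb * C * τ := by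
    rw [← Real.norm_eq_abs]
    refine (intervalIntegral.norm_integral_le_of_norm_le_const (C := Mb * C)
      fun ξ hξ => ?_).trans ?_
    · rw [uIoc_of_le hs.1] at hξ
      rw [Real.norm_eq_abs, abs_mul]
      exact mul_le_mul (hMb ξ ⟨hξ.1.le, hξ.2.trans hs.2⟩)
        (huv _ (mk_mem_triangle ⟨hξ.1.le, hξ.2⟩ hs.2)) (abs_nonneg _) hMb0
    · rw [sub_zero, abs_of_nonneg hs.1]
      exact mul_le_mul_of_nonneg_left hs.2 (mul_nonneg hMb0 hC0)
  calc |volterraRHS S₂ S₃ b u q - volterraRHS S₂ S₃ b v q|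
      = |S₂ q| * |∫ ξ in (0 : ℝ)..s, b ξ * (u (ξ, s) - v (ξ, s))| := by
        rw [volterraRHS, volterraRHS, add_sub_add_left_eq_sub, ← mul_sub, ← integral_sub
          ((hb.comp_fst_mul hu).intervalIntegrable_triangle hs)
          ((hb.comp_fst_mul hv).intervalIntegrable_triangle hs), abs_mul]
        simp only [s, mul_sub]
    _ ≤ M₂ * (Mb * C * τ) :=
        mul_le_mul (hM₂ q hq) hint (abs_nonneg _) ((abs_nonneg _).trans (hM₂ q hq))
    _ = τ * M₂ * Mb * C := by ring

end Volterra

section Operator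

variable {τ : ℝ} {S₂ S₃ : ℝ × ℝ → ℝ} {b : ℝ → ℝ} (hτ : 0 ≤ τ)
  (hS₂ : ContinuousOn S₂ (triangle τ)) (hS₃ : ContinuousOn S₃ (triangle τ)) (hb : ContinuousOn b (Icc 0 τ))

theorem ContinuousMap.comp_triangleRetraction_of_mem (w : C(triangle τ, ℝ)) {q : ℝ × ℝ}
    (hq : q ∈ triangle τ) : w.comp (triangleRetraction hτ) q = w ⟨q, hq⟩ := by
  simp [triangleRetraction_of_mem hτ hq]

noncomputable def volterraOperator (w : C(triangle τ, ℝ)) : C(triangle τ, ℝ) :=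
  ⟨(triangle τ).domRestrict (volterraRHS S₂ S₃ b (w.comp (triangleRetraction hτ))),
    (continuousOn_volterraRHS hS₂ hS₃ hb
      (w.comp (triangleRetraction hτ)).continuous.continuousOn).domRestrict⟩

theorem contractingWith_volterraOperator {M₂ Mb : ℝ} (hM₂ : ∀ q ∈ triangle τ, |S₂ q| ≤ M₂)
    (hMb : ∀ x ∈ Icc 0 τ, |b x| ≤ Mb) (hk : τ * M₂ * Mb < 1) :
    ContractingWith (τ * M₂ * Mb).toNNReal (volterraOperator hτ hS₂ hS₃ hb) := by
  have hM₂0 : 0 ≤ M₂ := (abs_nonneg _).trans (hM₂ _ (zero_mem_triangle hτ))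
  have hMb0 : 0 ≤ Mb := (abs_nonneg _).trans (hMb _ (left_mem_Icc.2 hτ))
  refine ⟨Real.toNNReal_lt_one.2 hk, LipschitzWith.of_dist_le_mul fun w v => ?_⟩
  rw [Real.coe_toNNReal _ (by positivity)]
  refine (ContinuousMap.dist_le (by positivity)).2 fun ⟨q, hq⟩ => ?_
  refine abs_volterraRHS_sub_le hb (w.comp _).continuous.continuousOn
    (v.comp _).continuous.continuousOn hM₂ hMb (fun p hp => ?_) hq
  rw [w.comp_triangleRetraction_of_mem hτ hp, v.comp_triangleRetraction_of_mem hτ hp,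
    ← Real.dist_eq]
  exact ContinuousMap.dist_apply_le_dist _

theorem eqOn_volterraRHS_of_isFixedPt {w : C(triangle τ, ℝ)}
    (hw : IsFixedPt (volterraOperator hτ hS₂ hS₃ hb) w) :
    EqOn (w.comp (triangleRetraction hτ))
      (volterraRHS S₂ S₃ b (w.comp (triangleRetraction hτ))) (triangle τ) := fun q hq => by
  rw [w.comp_triangleRetraction_of_mem hτ hq]
  exact (DFunLike.congr_fun hw ⟨q, hq⟩).symm

theorem isFixedPt_of_eqOn_volterraRHS {u : ℝ × ℝ → ℝ} (hu : ContinuousOn u (triangle τ))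
    (h : EqOn u (volterraRHS S₂ S₃ b u) (triangle τ)) :
    IsFixedPt (volterraOperator hτ hS₂ hS₃ hb) ⟨(triangle τ).domRestrict u, hu.domRestrict⟩ := by
  ext ⟨q, hq⟩
  refine (volterraRHS_congr (fun p hp => ?_) hq).trans (h hq).symm
  exact ContinuousMap.comp_triangleRetraction_of_mem hτ _ hp

end Operator

/-- Let `D_τ = {(x,t) : 0 ≤ x ≤ t ≤ τ}`, let `S₂, S₃` be continuous on
`D_τ` and `b` continuous on `[0,τ]`.  If `τ·(max_{D_τ}|S₂|)·(max_{[0,τ]}|b|) < 1`, then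
there is exactly one continuous `u : D_τ → ℝ` with
`u(x,t) = S₃(x,t) + S₂(x,t)·∫₀^{t−x} b(ξ)·u(ξ, t−x) dξ` on `D_τ`. -/
theorem stmt6 (τ : ℝ) (hτ : 0 < τ)
    (S₂ S₃ : ℝ × ℝ → ℝ) (b : ℝ → ℝ)
    (hS₂ : ContinuousOn S₂ {q : ℝ × ℝ | 0 ≤ q.1 ∧ q.1 ≤ q.2 ∧ q.2 ≤ τ})
    (hS₃ : ContinuousOn S₃ {q : ℝ × ℝ | 0 ≤ q.1 ∧ q.1 ≤ q.2 ∧ q.2 ≤ τ})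
    (hb : ContinuousOn b (Set.Icc 0 τ))
    (hsmall : τ * sSup ((fun q => |S₂ q|) '' {q : ℝ × ℝ | 0 ≤ q.1 ∧ q.1 ≤ q.2 ∧ q.2 ≤ τ})
        * sSup ((fun x => |b x|) '' Set.Icc 0 τ) < 1) :
    (∃ u : ℝ × ℝ → ℝ,
      ContinuousOn u {q : ℝ × ℝ | 0 ≤ q.1 ∧ q.1 ≤ q.2 ∧ q.2 ≤ τ} ∧
      ∀ q ∈ {q : ℝ × ℝ | 0 ≤ q.1 ∧ q.1 ≤ q.2 ∧ q.2 ≤ τ},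
        u q = S₃ q + S₂ q * ∫ ξ in (0:ℝ)..(q.2 - q.1), b ξ * u (ξ, q.2 - q.1)) ∧
    (∀ u v : ℝ × ℝ → ℝ,
      (ContinuousOn u {q : ℝ × ℝ | 0 ≤ q.1 ∧ q.1 ≤ q.2 ∧ q.2 ≤ τ} ∧
        ∀ q ∈ {q : ℝ × ℝ | 0 ≤ q.1 ∧ q.1 ≤ q.2 ∧ q.2 ≤ τ},
          u q = S₃ q + S₂ q * ∫ ξ in (0:ℝ)..(q.2 - q.1), b ξ * u (ξ, q.2 - q.1)) →
      (ContinuousOn v {q : ℝ × ℝ | 0 ≤ q.1 ∧ q.1 ≤ q.2 ∧ q.2 ≤ τ} ∧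
        ∀ q ∈ {q : ℝ × ℝ | 0 ≤ q.1 ∧ q.1 ≤ q.2 ∧ q.2 ≤ τ},
          v q = S₃ q + S₂ q * ∫ ξ in (0:ℝ)..(q.2 - q.1), b ξ * v (ξ, q.2 - q.1)) →
      Set.EqOn u v {q : ℝ × ℝ | 0 ≤ q.1 ∧ q.1 ≤ q.2 ∧ q.2 ≤ τ}) := by
  have hA := contractingWith_volterraOperator hτ.le hS₂ hS₃ hb
    (fun q hq => (isCompact_triangle τ).abs_le_sSup_abs_image hS₂ hq)
    (fun x hx => isCompact_Icc.abs_le_sSup_abs_image hb hx) hsmall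
  refine ⟨⟨_, (ContinuousMap.continuous _).continuousOn,
    eqOn_volterraRHS_of_isFixedPt hτ.le hS₂ hS₃ hb hA.fixedPoint_isFixedPt⟩, ?_⟩
  rintro u v ⟨hu, hu_eq⟩ ⟨hv, hv_eq⟩ q hq
  have huv := hA.fixedPoint_unique' (isFixedPt_of_eqOn_volterraRHS hτ.le hS₂ hS₃ hb hu hu_eq)
    (isFixedPt_of_eqOn_volterraRHS hτ.le hS₂ hS₃ hb hv hv_eq)
  exact DFunLike.congr_fun huv ⟨q, hq⟩
end
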